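/- arXiv:1206.1840 — 4 statements merged into one kernel-verified Lean document; each statement's English description precedes it below -/
import Mathlib

section
/- Let B' = {p_y # a : y ∈ G, a ∈ F_y} be the set of non-nilpotent elements of the distinguished basis B of a bismash product H = E^G # EF. Then B' is exactly the set of elements of B that are not nilpotent, and B' is closed under the antipode S. -/
lemma uniq_fac {Q : Type*} [Group Q] {F G : Subgroup Q} (hcap : F ⊓ G = ⊥)
    {a c : F} {b d : G} (h : (a : Q) * b = (c : Q) * d) : a = c ∧ b = d := by
  have hq : (c : Q)⁻¹ * a = (d : Q) * (b : Q)⁻¹ := by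
    rw [inv_mul_eq_iff_eq_mul, ← mul_assoc, ← h, mul_assoc, mul_inv_cancel, mul_one]
  have hmemF : (c : Q)⁻¹ * a ∈ F := F.mul_mem (F.inv_mem c.2) a.2
  have hmemG : (c : Q)⁻¹ * a ∈ G := hq ▸ G.mul_mem d.2 (G.inv_mem b.2)
  have h1 : (c : Q)⁻¹ * a ∈ F ⊓ G := ⟨hmemF, hmemG⟩
  rw [hcap, Subgroup.mem_bot] at h1
  have hac : (a : Q) = c := by
    have := mul_eq_one_iff_inv_eq.mp h1
    simpa using this.symm
  have hbd : (b : Q) = d := by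
    have h2 : (d : Q) * (b : Q)⁻¹ = 1 := by rw [← hq, h1]
    have := mul_eq_one_iff_eq_inv.mp h2
    have : (d : Q) = b := by simpa using this
    exact this.symm
  exact ⟨Subtype.ext hac, Subtype.ext hbd⟩

open scoped Classical in
/-- The set `B' = {p_y # a : a ∈ F_y}` is exactly the set of non-nilpotent elements
of the distinguished basis `B`, and `B'` is closed under the antipode `S`. -/
theorem stmt9 (E : Type*) [Field E] (Q : Type*) [Group Q] [Finite Q]
    (F G : Subgroup Q) (rho : G → F → F) (sig : G → F → G)
    (hfac : ∀ (x : G) (a : F), (x : Q) * (a : Q) = (rho x a : Q) * (sig x a : Q))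
    (hcap : F ⊓ G = ⊥)
    (H : Type*) [Ring H] [Algebra E H]
    (pb : G → F → H)
    (hpb : ∀ (y : G) (a : F), pb y a ≠ 0)
    (hmul : ∀ (x : G) (a : F) (y : G) (b : F),
      pb x a * pb y b = if y = sig x a then pb x (a * b) else 0)
    (S : H →ₗ[E] H)
    (hS : ∀ (x : G) (a : F), S (pb x a) = pb (sig x a)⁻¹ (rho x a)⁻¹) :
    (∀ (y : G) (a : F), (∃ k : ℕ, 1 ≤ k ∧ (pb y a) ^ k = 0) ↔ sig y a ≠ y) ∧
      ∀ (y : G) (a : F), sig y a = y →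
        ∃ (z : G) (c : F), sig z c = z ∧ S (pb y a) = pb z c := by
  have hpow : ∀ (y : G) (a : F), sig y a = y → ∀ k : ℕ, 1 ≤ k →
      (pb y a) ^ k = pb y (a ^ k) := by
    intro y a hy k hk
    induction k with
    | zero => omega
    | succ n ih =>
      rcases Nat.eq_or_lt_of_le hk with h1 | h1
      · simp [← h1]
      · have hn : 1 ≤ n := by omega
        rw [pow_succ', ih hn, hmul, if_pos hy.symm, ← pow_succ']
  constructor
  · intro y a
    constructor
    · rintro ⟨k, hk, hzero⟩ hsig
      rw [hpow y a hsig k hk] at hzero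
      exact hpb y (a ^ k) hzero
    · intro hsig
      refine ⟨2, by norm_num, ?_⟩
      rw [sq, hmul, if_neg (fun h => hsig h.symm)]
  · intro y a hy
    refine ⟨(sig y a)⁻¹, (rho y a)⁻¹, ?_, hS y a⟩
    have h1 := hfac (sig y a)⁻¹ (rho y a)⁻¹
    have h2 : (((sig y a)⁻¹ : G) : Q) * (((rho y a)⁻¹ : F) : Q)
        = ((a⁻¹ : F) : Q) * ((y⁻¹ : G) : Q) := by
      push_cast
      rw [← mul_inv_rev, ← mul_inv_rev, ← hfac y a]
    rw [h2] at h1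
    rw [hy] at h1 ⊢
    exact ((uniq_fac hcap h1).2).symm
end

section
/- Let R be a discrete valuation ring with uniformizer π and fraction field K, V a finite-dimensional K-vector space with a nondegenerate symmetric bilinear form ⟨-,-⟩, and L ⊆ V a full-rank R-lattice that is maximal among lattices satisfying ⟨L, L⟩ ⊆ R (integral lattices). Then π L* ⊆ L, where L* = {v ∈ V : ⟨L, v⟩ ⊆ R} is the dual lattice. -/
/-!
If `v ∈ L*` and `⟨v, v⟩ ∈ R`, then `L + Rv` is again an integral lattice, so `v ∈ L` by
maximality. Since `⟨v, v⟩` has bounded denominator, this gives `π ^ n • v ∈ L` for some `n`.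
Moreover, if `π ^ (n + 2) • v ∈ L` then
`⟨π ^ (n + 1) • v, π ^ (n + 1) • v⟩ = π ^ n • ⟨v, π ^ (n + 2) • v⟩ ∈ R`, so `π ^ (n + 1) • v ∈ L`;
descending in `n` gives `π • v ∈ L`.
-/

open Submodule

theorem IsDiscreteValuationRing.exists_pow_smul_mem_one {R : Type*} [CommRing R] [IsDomain R]
    [IsDiscreteValuationRing R] {K : Type*} [Field K] [Algebra R K] [IsFractionRing R K]
    {π : R} (hπ : Irreducible π) (x : K) : ∃ n : ℕ, π ^ n • x ∈ (1 : Submodule R K) := by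
  obtain ⟨s, r, hr⟩ := IsLocalization.exists_integer_multiple (nonZeroDivisors R) x
  obtain ⟨n, u, hs⟩ := eq_unit_mul_pow_irreducible (nonZeroDivisors.coe_ne_zero s) hπ
  refine ⟨n, ?_⟩
  have hx : π ^ n • x = (↑u⁻¹ : R) • (s : R) • x := by
    rw [hs, smul_smul, ← mul_assoc, Units.inv_mul, one_mul]
  rw [hx, ← hr]
  exact smul_mem _ _ (mem_one.2 ⟨r, rfl⟩)

namespace LinearMap.BilinForm

variable {R S M : Type*} [CommRing R] [Field S] [AddCommGroup M]
  [Algebra R S] [Module R M] [Module S M] [IsScalarTower R S M] {B : LinearMap.BilinForm S M}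

theorem smul_smul_of_tower (a b : R) (x y : M) : B (a • x) (b • y) = (a * b) • B x y := by
  rw [map_smul_of_tower, map_smul_of_tower, LinearMap.smul_apply, smul_smul, mul_comm]

theorem mem_dualSubmodule_span_singleton {x v : M} :
    x ∈ B.dualSubmodule (span R {v}) ↔ B x v ∈ (1 : Submodule R S) := by
  refine ⟨fun hx => hx v (mem_span_singleton_self v), fun hx y hy => ?_⟩
  obtain ⟨c, rfl⟩ := mem_span_singleton.1 hy
  rw [map_smul_of_tower]
  exact smul_mem _ c hx

theorem sup_le_dualSubmodule_sup_iff (hB : B.flip = B) {N N' : Submodule R M} :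
    N ⊔ N' ≤ B.dualSubmodule (N ⊔ N') ↔
      N ≤ B.dualSubmodule N ∧ N' ≤ B.dualSubmodule N ∧ N' ≤ B.dualSubmodule N' := by
  have swap : ∀ N₁ N₂ : Submodule R M, N₁ ≤ B.dualSubmodule N₂ ↔ N₂ ≤ B.dualSubmodule N₁ :=
    fun N₁ N₂ => by rw [← le_flip_dualSubmodule, hB]
  rw [sup_le_iff, swap N, swap N', sup_le_iff, sup_le_iff, swap N N']
  tauto

end LinearMap.BilinForm

section MaximalIntegralLattice

open LinearMap.BilinForm

variable {R K V : Type*} [CommRing R] [Field K] [Algebra R K] [AddCommGroup V] [Module K V]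
  [Module R V] [IsScalarTower R K V] {B : LinearMap.BilinForm K V} {L : Submodule R V}

variable (B) in
def IsIntegralLattice (L : Submodule R V) : Prop :=
  L.FG ∧ span K (L : Set V) = ⊤ ∧ L ≤ B.dualSubmodule L

theorem IsIntegralLattice.sup_span_singleton (hB : B.flip = B) (hL : IsIntegralLattice B L)
    {v : V} (hv : v ∈ B.dualSubmodule L) (hvv : B v v ∈ (1 : Submodule R K)) :
    IsIntegralLattice B (L ⊔ span R {v}) := by
  obtain ⟨hfg, hfull, hint⟩ := hL
  refine ⟨hfg.sup (fg_span_singleton v), top_unique (hfull ▸ span_mono ?_), ?_⟩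
  · exact SetLike.coe_mono le_sup_left
  · rw [sup_le_dualSubmodule_sup_iff hB, span_singleton_le_iff_mem, span_singleton_le_iff_mem,
      mem_dualSubmodule_span_singleton]
    exact ⟨hint, hv, hvv⟩

theorem mem_of_maximal_of_apply_self_mem_one (hB : B.flip = B)
    (hL : Maximal (IsIntegralLattice B) L) {v : V} (hv : v ∈ B.dualSubmodule L)
    (hvv : B v v ∈ (1 : Submodule R K)) : v ∈ L :=
  hL.eq_of_ge (hL.prop.sup_span_singleton hB hv hvv) le_sup_left ▸
    mem_sup_right (mem_span_singleton_self v)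

theorem smul_mem_of_maximal_of_dvd_mul_self (hB : B.flip = B)
    (hL : Maximal (IsIntegralLattice B) L) {v : V} (hv : v ∈ B.dualSubmodule L) {c r : R}
    (hc : c • v ∈ L) (hcr : c ∣ r * r) : r • v ∈ L := by
  obtain ⟨d, hd⟩ := hcr
  refine mem_of_maximal_of_apply_self_mem_one hB hL (smul_mem _ r hv) ?_
  have hcv : B v (c • v) = c • B v v := LinearMap.map_smul_of_tower (B v) c v
  rw [smul_smul_of_tower, hd, mul_comm, ← smul_smul, ← hcv]
  exact smul_mem _ d (hv _ hc)

theorem smul_mem_of_maximal_of_pow_succ_smul_mem (hB : B.flip = B)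
    (hL : Maximal (IsIntegralLattice B) L) {v : V} (hv : v ∈ B.dualSubmodule L) {π : R} :
    ∀ n : ℕ, π ^ (n + 1) • v ∈ L → π • v ∈ L
  | 0, h => by simpa using h
  | n + 1, h => smul_mem_of_maximal_of_pow_succ_smul_mem hB hL hv n
      (smul_mem_of_maximal_of_dvd_mul_self hB hL hv h
        (by rw [← pow_add]; exact pow_dvd_pow π (by omega)))

theorem smul_mem_of_maximal_of_mem_dualSubmodule [IsDomain R] [IsDiscreteValuationRing R]
    [IsFractionRing R K] {π : R} (hπ : Irreducible π) (hB : B.flip = B)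
    (hL : Maximal (IsIntegralLattice B) L) {v : V} (hv : v ∈ B.dualSubmodule L) : π • v ∈ L := by
  obtain ⟨n, hn⟩ := IsDiscreteValuationRing.exists_pow_smul_mem_one hπ (B v v)
  have hnv : π ^ n • v ∈ L := by
    refine mem_of_maximal_of_apply_self_mem_one hB hL (smul_mem _ _ hv) ?_
    rw [smul_smul_of_tower, ← smul_smul]
    exact smul_mem _ _ hn
  refine smul_mem_of_maximal_of_pow_succ_smul_mem hB hL hv n ?_
  rw [pow_succ', mul_smul]
  exact smul_mem _ π hnv

end MaximalIntegralLattice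

theorem stmt14_general (R : Type*) [CommRing R] [IsDomain R] [IsDiscreteValuationRing R]
    (π : R) (hπ : Irreducible π)
    (K : Type*) [Field K] [Algebra R K] [IsFractionRing R K]
    (V : Type*) [AddCommGroup V] [Module K V]
    [Module R V] [IsScalarTower R K V]
    (B : LinearMap.BilinForm K V)
    (hsymm : ∀ v w : V, B v w = B w v)
    (L : Submodule R V) (hfg : L.FG)
    (hfull : Submodule.span K (L : Set V) = ⊤)
    (hint : ∀ x ∈ L, ∀ y ∈ L, ∃ r : R, algebraMap R K r = B x y)
    (hmax : ∀ L' : Submodule R V, L'.FG → Submodule.span K (L' : Set V) = ⊤ →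
      (∀ x ∈ L', ∀ y ∈ L', ∃ r : R, algebraMap R K r = B x y) → L ≤ L' → L' = L) :
    ∀ v : V, (∀ l ∈ L, ∃ r : R, algebraMap R K r = B l v) → π • v ∈ L := by
  intro v hv
  have hB : B.flip = B := LinearMap.ext₂ fun x y => hsymm y x
  have hL : Maximal (IsIntegralLattice B) L :=
    ⟨⟨hfg, hfull, fun x hx y hy => mem_one.2 (hint x hx y hy)⟩, fun L' hL' hle =>
      (hmax L' hL'.1 hL'.2.1 (fun x hx y hy => mem_one.1 (hL'.2.2 hx y hy)) hle).le⟩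
  refine smul_mem_of_maximal_of_mem_dualSubmodule hπ hB hL fun l hl => ?_
  rw [hsymm]
  exact mem_one.2 (hv l hl)

/-- If `L` is a maximal integral lattice in a `K`-space with nondegenerate
symmetric bilinear form, then `π L* ⊆ L`, where `L*` is the dual lattice and `π`
a uniformizer of the DVR `R`. -/
theorem stmt14 (R : Type*) [CommRing R] [IsDomain R] [IsDiscreteValuationRing R]
    (π : R) (hπ : Irreducible π)
    (K : Type*) [Field K] [Algebra R K] [IsFractionRing R K]
    (V : Type*) [AddCommGroup V] [Module K V] [FiniteDimensional K V]
    [Module R V] [IsScalarTower R K V]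
    (B : LinearMap.BilinForm K V) (hB : B.Nondegenerate)
    (hsymm : ∀ v w : V, B v w = B w v)
    (L : Submodule R V) (hfg : L.FG)
    (hfull : Submodule.span K (L : Set V) = ⊤)
    (hint : ∀ x ∈ L, ∀ y ∈ L, ∃ r : R, algebraMap R K r = B x y)
    (hmax : ∀ L' : Submodule R V, L'.FG → Submodule.span K (L' : Set V) = ⊤ →
      (∀ x ∈ L', ∀ y ∈ L', ∃ r : R, algebraMap R K r = B x y) → L ≤ L' → L' = L) :
    ∀ v : V, (∀ l ∈ L, ∃ r : R, algebraMap R K r = B l v) → π • v ∈ L :=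
  stmt14_general R π hπ K V B hsymm L hfg hfull hint hmax
end

section
/- Let n = 2n₁ + n₂ and let C be an n × n matrix over ℤ such that σ⁻¹Cσ = C, where σ is the permutation (1 2)(3 4)···(2n₁−1 2n₁) ∈ S_n (fixing 2n₁+1, …, n). Write C in block form C = [[C₀, C₂],[C₂ᵗ, C₁]] with C₀ of size 2n₁ × 2n₁ and C₁ of size n₂ × n₂. Then det(C) ≡ det(C₀)·det(C₁) (mod 2). -/
/-!
Group the indices as (even positions below `2n₁`, odd positions below `2n₁`, the rest). Then
`σ` swaps the first two groups and, modulo 2, `C = [[a, b, r], [b, a, r], [s, s, d]]` with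
`C₀ = [[a, b], [b, a]]` and `C₁ = d`. Adding the first row group to the second and the second
column group to the first makes `C` block triangular with diagonal blocks `a + b`, `a + b`, `d`
(the doubled blocks `2r`, `2s`, `2(a + b)` vanish), while `det C₀ = det (a + b) * det (a - b)`
and `a - b = a + b` in characteristic 2.
-/

open Matrix

def swapPairs (ι κ : Type*) : Equiv.Perm ((ι ⊕ ι) ⊕ κ) :=
  Equiv.sumCongr (Equiv.sumComm ι ι) (Equiv.refl κ)

namespace Matrix

variable {ι κ R : Type*} [Fintype ι] [Fintype κ] [DecidableEq ι] [DecidableEq κ] [CommRing R]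

theorem det_fromBlocks_self_swap (a b : Matrix ι ι R) :
    (fromBlocks a b b a).det = (a + b).det * (a - b).det := by
  have h : fromBlocks 1 1 0 1 * fromBlocks a b b a * fromBlocks 1 (-1) 0 1
      = fromBlocks (a + b) 0 b (a - b) := by
    simp only [fromBlocks_multiply]
    congr 1 <;> noncomm_ring
  simpa [det_fromBlocks_zero₂₁, det_fromBlocks_zero₁₂] using congrArg det h

theorem det_fromBlocks_fromBlocks_triangular (A B D : Matrix ι ι R) (r : Matrix ι κ R)
    (s : Matrix κ ι R) (d : Matrix κ κ R) :
    (fromBlocks (fromBlocks A B 0 D) (fromRows r 0) (fromCols 0 s) d).det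
      = A.det * D.det * d.det := by
  have h : reindex (Equiv.sumAssoc ι ι κ) (Equiv.sumAssoc ι ι κ)
      (fromBlocks (fromBlocks A B 0 D) (fromRows r 0) (fromCols 0 s) d)
      = fromBlocks A (fromCols B r) 0 (fromBlocks D 0 s d) := by
    ext (i | i | i) (j | j | j) <;> rfl
  rw [← det_reindex_self (Equiv.sumAssoc ι ι κ), h, det_fromBlocks_zero₂₁,
    det_fromBlocks_zero₁₂, mul_assoc]

theorem det_fromBlocks_fromBlocks_self_swap [CharP R 2] (a b : Matrix ι ι R)
    (r : Matrix ι κ R) (s : Matrix κ ι R) (d : Matrix κ κ R) :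
    (fromBlocks (fromBlocks a b b a) (fromRows r r) (fromCols s s) d).det
      = (a + b).det * (a + b).det * d.det := by
  set P : Matrix ((ι ⊕ ι) ⊕ κ) ((ι ⊕ ι) ⊕ κ) R := fromBlocks (fromBlocks 1 0 1 1) 0 0 1
  have h : P * fromBlocks (fromBlocks a b b a) (fromRows r r) (fromCols s s) d * P
      = fromBlocks (fromBlocks (a + b) b 0 (a + b)) (fromRows r 0) (fromCols 0 s) d := by
    simp only [P, fromBlocks_multiply, fromBlocks_mul_fromRows, fromCols_mul_fromBlocks,
      Matrix.zero_mul, Matrix.mul_zero, Matrix.one_mul, Matrix.mul_one, add_zero, zero_add,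
      add_comm b a]
    simp only [← two_smul R, CharTwo.two_eq_zero, zero_smul]
  have hP : P.det = 1 := by simp [P]
  simpa [hP, det_fromBlocks_fromBlocks_triangular] using congrArg det h

theorem det_eq_det_toBlocks₁₁_mul_det_toBlocks₂₂_of_swapPairs [CharP R 2]
    (M : Matrix ((ι ⊕ ι) ⊕ κ) ((ι ⊕ ι) ⊕ κ) R)
    (hM : ∀ i j, M (swapPairs ι κ i) (swapPairs ι κ j) = M i j) :
    M.det = M.toBlocks₁₁.det * M.toBlocks₂₂.det := by
  set a := M.toBlocks₁₁.toBlocks₁₁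
  set b := M.toBlocks₁₁.toBlocks₁₂
  have hform : M = fromBlocks (fromBlocks a b b a)
      (fromRows M.toBlocks₁₂.toRows₁ M.toBlocks₁₂.toRows₁)
      (fromCols M.toBlocks₂₁.toCols₁ M.toBlocks₂₁.toCols₁) M.toBlocks₂₂ := by
    ext ((i | i) | i) ((j | j) | j) <;> first | rfl | exact (hM _ _).symm
  rw [hform, det_fromBlocks_fromBlocks_self_swap, toBlocks_fromBlocks₁₁, toBlocks_fromBlocks₂₂,
    det_fromBlocks_self_swap, show a - b = a + b by ext; exact CharTwo.sub_eq_add _ _]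

end Matrix

def finSumFinEquivInterleave (n : ℕ) : Fin n ⊕ Fin n ≃ Fin (2 * n) where
  toFun := Sum.elim (fun k => ⟨2 * k, by omega⟩) (fun k => ⟨2 * k + 1, by omega⟩)
  invFun i := if (i : ℕ) % 2 = 0 then .inl ⟨i / 2, by omega⟩ else .inr ⟨i / 2, by omega⟩
  left_inv := by
    rintro (k | k)
    · simp
    · simp [Fin.ext_iff]
      omega
  right_inv i := by
    by_cases h : (i : ℕ) % 2 = 0 <;> simp [h, Fin.ext_iff] <;> omega

def finPairsSumEquiv (n₁ n₂ : ℕ) : (Fin n₁ ⊕ Fin n₁) ⊕ Fin n₂ ≃ Fin (2 * n₁ + n₂) :=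
  (Equiv.sumCongr (finSumFinEquivInterleave n₁) (Equiv.refl _)).trans finSumFinEquiv

@[simp] theorem finPairsSumEquiv_inl_inl {n₁ n₂ : ℕ} (k : Fin n₁) :
    (finPairsSumEquiv n₁ n₂ (.inl (.inl k)) : ℕ) = 2 * k := rfl

@[simp] theorem finPairsSumEquiv_inl_inr {n₁ n₂ : ℕ} (k : Fin n₁) :
    (finPairsSumEquiv n₁ n₂ (.inl (.inr k)) : ℕ) = 2 * k + 1 := rfl

@[simp] theorem finPairsSumEquiv_inr {n₁ n₂ : ℕ} (j : Fin n₂) :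
    (finPairsSumEquiv n₁ n₂ (.inr j) : ℕ) = 2 * n₁ + j := rfl

theorem finPairsSumEquiv_swapPairs {n₁ n₂ : ℕ} (σ : Equiv.Perm (Fin (2 * n₁ + n₂)))
    (hσ : ∀ i : Fin (2 * n₁ + n₂),
      ((σ i : ℕ) = if (i : ℕ) < 2 * n₁ then
        (if (i : ℕ) % 2 = 0 then (i : ℕ) + 1 else (i : ℕ) - 1) else (i : ℕ)))
    (x : (Fin n₁ ⊕ Fin n₁) ⊕ Fin n₂) :
    finPairsSumEquiv n₁ n₂ (swapPairs _ _ x) = σ (finPairsSumEquiv n₁ n₂ x) := by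
  rcases x with (k | k) | j <;> ext <;> simp [swapPairs, hσ]
  omega

/-- If `C` is an `n × n` integer matrix, `n = 2n₁ + n₂`, invariant under conjugation
by the permutation `σ = (1 2)(3 4)⋯(2n₁−1 2n₁)`, and `C₀`, `C₁` are the diagonal
blocks of sizes `2n₁` and `n₂`, then `det C ≡ det C₀ · det C₁ (mod 2)`. -/
theorem stmt17 (n₁ n₂ : ℕ)
    (σ : Equiv.Perm (Fin (2 * n₁ + n₂)))
    (hσ : ∀ i : Fin (2 * n₁ + n₂),
      ((σ i : ℕ) = if (i : ℕ) < 2 * n₁ then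
        (if (i : ℕ) % 2 = 0 then (i : ℕ) + 1 else (i : ℕ) - 1) else (i : ℕ)))
    (C : Matrix (Fin (2 * n₁ + n₂)) (Fin (2 * n₁ + n₂)) ℤ)
    (hC : ∀ i j, C i j = C (σ i) (σ j))
    (C₀ : Matrix (Fin (2 * n₁)) (Fin (2 * n₁)) ℤ)
    (hC₀ : ∀ i j, C₀ i j =
      C (Fin.castLE (Nat.le_add_right _ _) i) (Fin.castLE (Nat.le_add_right _ _) j))
    (C₁ : Matrix (Fin n₂) (Fin n₂) ℤ)
    (hC₁ : ∀ i j, C₁ i j =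
      C ⟨2 * n₁ + (i : ℕ), by omega⟩ ⟨2 * n₁ + (j : ℕ), by omega⟩) :
    C.det ≡ C₀.det * C₁.det [ZMOD 2] := by
  let f := Int.castRingHom (ZMod 2)
  let e := finPairsSumEquiv n₁ n₂
  let M := (f.mapMatrix C).submatrix e e
  have hM : ∀ i j, M (swapPairs _ _ i) (swapPairs _ _ j) = M i j := fun i j => by
    simp only [M, e, submatrix_apply, finPairsSumEquiv_swapPairs σ hσ,
      RingHom.mapMatrix_apply, map_apply, ← hC]
  have hM₁₁ : M.toBlocks₁₁ = (f.mapMatrix C₀).submatrix (finSumFinEquivInterleave n₁)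
      (finSumFinEquivInterleave n₁) := by
    ext i j
    exact congrArg f (hC₀ _ _).symm
  have hM₂₂ : M.toBlocks₂₂ = f.mapMatrix C₁ := by
    ext i j
    exact congrArg f (hC₁ i j).symm
  refine (ZMod.intCast_eq_intCast_iff _ _ 2).mp ?_
  change f C.det = f (C₀.det * C₁.det)
  rw [map_mul, f.map_det, f.map_det, f.map_det, ← det_submatrix_equiv_self e,
    det_eq_det_toBlocks₁₁_mul_det_toBlocks₂₂_of_swapPairs M hM, hM₁₁, hM₂₂,
    det_submatrix_equiv_self]
end

section
/- Let D be an m × n integer matrix, and let m = 2m₁ + m₂, n = 2n₁ + n₂. Suppose d_{ij} = d_{σ(i)τ(j)} for all i, j, where σ swaps 2i−1 ↔ 2i for i ≤ m₁ (fixing indices > 2m₁) and τ swaps 2j−1 ↔ 2j for j ≤ n₁ (fixing indices > 2n₁). Let C = DᵗD and fix j with 2n₁ < j ≤ n. If d_{ij} is even for all i with 2m₁ < i ≤ m, then every entry c_{jk} of C with 2n₁ < k ≤ n is even. -/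
/-- Let `D` be an `m × n` integer matrix with the symmetry `d_{ij} = d_{σ(i)τ(j)}`
for the pairing involutions `σ`, `τ`, and `C = Dᵗ D`. If `j > 2n₁` and `d_{ij}` is
even for all `i > 2m₁`, then `c_{jk}` is even for all `k > 2n₁`. -/
theorem stmt18 (m₁ m₂ n₁ n₂ : ℕ)
    (σ : Equiv.Perm (Fin (2 * m₁ + m₂)))
    (hσ : ∀ i : Fin (2 * m₁ + m₂),
      ((σ i : ℕ) = if (i : ℕ) < 2 * m₁ then
        (if (i : ℕ) % 2 = 0 then (i : ℕ) + 1 else (i : ℕ) - 1) else (i : ℕ)))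
    (τ : Equiv.Perm (Fin (2 * n₁ + n₂)))
    (hτ : ∀ j : Fin (2 * n₁ + n₂),
      ((τ j : ℕ) = if (j : ℕ) < 2 * n₁ then
        (if (j : ℕ) % 2 = 0 then (j : ℕ) + 1 else (j : ℕ) - 1) else (j : ℕ)))
    (D : Matrix (Fin (2 * m₁ + m₂)) (Fin (2 * n₁ + n₂)) ℤ)
    (hD : ∀ i j, D i j = D (σ i) (τ j))
    (j : Fin (2 * n₁ + n₂)) (hj : 2 * n₁ ≤ (j : ℕ))
    (heven : ∀ i : Fin (2 * m₁ + m₂), 2 * m₁ ≤ (i : ℕ) → 2 ∣ D i j) :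
    ∀ k : Fin (2 * n₁ + n₂), 2 * n₁ ≤ (k : ℕ) → 2 ∣ (D.transpose * D) j k := by
  intro k hk
  have hinv : ∀ i, σ (σ i) = i := by
    intro i
    apply Fin.ext
    rw [hσ (σ i), hσ i]
    split_ifs <;> omega
  have hτj : τ j = j := by
    apply Fin.ext
    rw [hτ]
    simp [Nat.not_lt.2 hj]
  have hτk : τ k = k := by
    apply Fin.ext
    rw [hτ]
    simp [Nat.not_lt.2 hk]
  have keyj : ∀ i, D (σ i) j = D i j := fun i => by
    conv_rhs => rw [hD i j, hτj]
  have keyk : ∀ i, D (σ i) k = D i k := fun i => by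
    conv_rhs => rw [hD i k, hτk]
  rw [Matrix.mul_apply]
  simp only [Matrix.transpose_apply]
  rw [show (2 : ℤ) = ((2 : ℕ) : ℤ) from rfl, ← ZMod.intCast_zmod_eq_zero_iff_dvd]
  push_cast
  refine Finset.sum_involution (fun i _ => σ i) ?_ ?_ (fun i hi => Finset.mem_univ _)
    (fun i _ => hinv i)
  · intro i _
    rw [keyj, keyk]
    exact CharTwo.add_self_eq_zero _
  · intro i _ hf hσi
    have hσi' : σ i = i := hσi
    apply hf
    have hi2 : 2 * m₁ ≤ (i : ℕ) := by
      by_contra hlt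
      push_neg at hlt
      have := hσ i
      rw [hσi'] at this
      simp only [if_pos hlt] at this
      split_ifs at this <;> omega
    obtain ⟨c, hc⟩ := heven i hi2
    rw [hc]
    push_cast
    rw [show ((2 : ZMod 2)) = 0 by decide]
    ring
end
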